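/- Suboptimality of pessimistic selection: let Π_s be a finite set of m policies, Z_π,i = w_π(x_i,a_i)c_i ≤ 0 i.i.d., R(π) = E[Z_π], R̂_λ(π) = −(1/(nλ))∑ᵢ log(1 − λZ_{π,i}), π* = argmin_{π∈Π_s} R(π), π̂ = argmin_{π∈Π_s} R̂_λ(π). For λ > 0 and δ ∈ (0,1], with probability at least 1 − δ: 0 ≤ R(π̂) − R(π*) ≤ λ S_λ(π*) + 2 log(2m/δ)/(λn), where S_λ(π) = E[Z_π²/(1 − λZ_π)]. -/

import Mathlib

/-!
Chernoff's bound applied to `∑ᵢ log (1 - λ Zᵢ)` and to `-∑ᵢ log (1 - λ Zᵢ)` controls the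
Logarithmic Smoothing estimator from both sides, because its exponential moments are explicit:
`E[1 - λZ] ≤ exp (-λR)` and `E[(1 - λZ)⁻¹] = 1 + λR + λ²S ≤ exp (λR + λ²S)`. With
`u = log (2m/δ) / (nλ)`, each of the `m` events `R̂(π) ≤ R(π) - u` and the event
`R(π*) + λS(π*) + u ≤ R̂(π*)` has probability at most `δ/(2m)`. Outside their union,
`R(π̂) - u < R̂(π̂) ≤ R̂(π*) < R(π*) + λS(π*) + u`.
-/

open MeasureTheory ProbabilityTheory Real Filter

section

variable {Ω : Type*} [MeasurableSpace Ω] {μ : Measure Ω} {Y : Ω → ℝ} {lam : ℝ}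

lemma integral_one_sub_mul_le_exp [IsProbabilityMeasure μ] (hY : Integrable Y μ) :
    ∫ ω, (1 - lam * Y ω) ∂μ ≤ exp (-(lam * ∫ ω, Y ω ∂μ)) := by
  rw [integral_sub (integrable_const 1) (hY.const_mul lam), integral_const_mul]
  simp only [integral_const, probReal_univ, smul_eq_mul, one_mul]
  linarith [add_one_le_exp (-(lam * ∫ ω, Y ω ∂μ))]

lemma integrable_inv_one_sub_mul [IsFiniteMeasure μ] (hY0 : ∀ ω, Y ω ≤ 0) (hlam : 0 ≤ lam)
    (hY : AEMeasurable Y μ) : Integrable (fun ω => (1 - lam * Y ω)⁻¹) μ := by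
  refine (integrable_const (1 : ℝ)).mono
    ((hY.const_mul lam).const_sub 1).inv.aestronglyMeasurable (Eventually.of_forall fun ω => ?_)
  have h1 : 1 ≤ 1 - lam * Y ω := by nlinarith [hY0 ω]
  rw [norm_of_nonneg (by positivity), norm_one]
  exact inv_le_one_of_one_le₀ h1

lemma integrable_sq_div_one_sub_mul (hY0 : ∀ ω, Y ω ≤ 0) (hlam : 0 ≤ lam)
    (hY : Integrable Y μ) (hY2 : Integrable (fun ω => Y ω ^ 2) μ) :
    Integrable (fun ω => Y ω ^ 2 / (1 - lam * Y ω)) μ := by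
  have hmeas : AEMeasurable (fun ω => Y ω ^ 2 / (1 - lam * Y ω)) μ :=
    hY2.aemeasurable.div ((hY.aemeasurable.const_mul lam).const_sub 1)
  refine hY2.mono hmeas.aestronglyMeasurable (Eventually.of_forall fun ω => ?_)
  have h1 : 1 ≤ 1 - lam * Y ω := by nlinarith [hY0 ω]
  rw [norm_of_nonneg (by positivity), norm_of_nonneg (sq_nonneg _)]
  exact div_le_self (sq_nonneg _) h1

lemma integral_inv_one_sub_mul [IsProbabilityMeasure μ] (hY0 : ∀ ω, Y ω ≤ 0) (hlam : 0 ≤ lam)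
    (hY : Integrable Y μ) (hY2 : Integrable (fun ω => Y ω ^ 2) μ) :
    ∫ ω, (1 - lam * Y ω)⁻¹ ∂μ =
      1 + lam * ∫ ω, Y ω ∂μ + lam ^ 2 * ∫ ω, Y ω ^ 2 / (1 - lam * Y ω) ∂μ := by
  have hsplit : ∀ ω, (1 - lam * Y ω)⁻¹ =
      1 + lam * Y ω + lam ^ 2 * (Y ω ^ 2 / (1 - lam * Y ω)) := fun ω => by
    have : 1 - lam * Y ω ≠ 0 := by nlinarith [hY0 ω]
    field_simp
    ring
  simp_rw [hsplit]
  have hlin : Integrable (fun ω => 1 + lam * Y ω) μ := (integrable_const 1).add (hY.const_mul lam)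
  rw [integral_add hlin ((integrable_sq_div_one_sub_mul hY0 hlam hY hY2).const_mul _),
    integral_add (integrable_const 1) (hY.const_mul lam), integral_const_mul, integral_const_mul]
  simp

lemma ofReal_one_sub_le_of_measure_compl_le [IsProbabilityMeasure μ] {s : Set Ω} {δ : ℝ}
    (hδ : 0 ≤ δ) (h : μ sᶜ ≤ ENNReal.ofReal δ) : ENNReal.ofReal (1 - δ) ≤ μ s := by
  rw [ENNReal.ofReal_sub 1 hδ, ENNReal.ofReal_one, tsub_le_iff_right]
  calc 1 = μ Set.univ := measure_univ.symm
    _ ≤ μ s + μ sᶜ := measure_univ_le_add_compl s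
    _ ≤ μ s + ENNReal.ofReal δ := by gcongr

lemma measure_iUnion_union_le_of_le_div {m : ℕ} (hm : 0 < m) {A : Fin m → Set Ω} {B : Set Ω}
    {δ : ℝ} (hδ : 0 ≤ δ) (hA : ∀ k, μ (A k) ≤ ENNReal.ofReal (δ / (2 * m)))
    (hB : μ B ≤ ENNReal.ofReal (δ / (2 * m))) : μ ((⋃ k, A k) ∪ B) ≤ ENNReal.ofReal δ := by
  have hm1 : (1 : ℝ) ≤ m := by exact_mod_cast hm
  calc μ ((⋃ k, A k) ∪ B) ≤ ∑ k, μ (A k) + μ B :=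
        (measure_union_le _ _).trans (add_le_add_left (measure_iUnion_fintype_le _ _) _)
    _ ≤ ∑ _k : Fin m, ENNReal.ofReal (δ / (2 * m)) + ENNReal.ofReal (δ / (2 * m)) := by
        gcongr with k; exact hA k
    _ = ENNReal.ofReal ((m + 1) * (δ / (2 * m))) := by
        rw [ENNReal.ofReal_mul (by positivity), ENNReal.ofReal_add (by positivity) zero_le_one]
        simp [add_mul]
    _ ≤ ENNReal.ofReal δ := by
        gcongr
        rw [mul_div_assoc', div_le_iff₀ (by positivity)]
        nlinarith

end

section IID

variable {Ω : Type*} [MeasurableSpace Ω] {μ : Measure Ω} [IsProbabilityMeasure μ]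
  {α : Type*} [MeasurableSpace α] {n : ℕ} {D : Fin n → Ω → α} {D0 : Ω → α}

theorem measure_le_sum_le_exp_of_integral_exp_le (hDmeas : ∀ i, Measurable (D i))
    (hindep : iIndepFun D μ) (hident : ∀ i, IdentDistrib (D i) D0 μ μ) {h : α → ℝ}
    (hh : Measurable h) (hint : Integrable (fun ω => exp (h (D0 ω))) μ) {b : ℝ}
    (hb : ∫ ω, exp (h (D0 ω)) ∂μ ≤ exp b) (c : ℝ) :
    μ {ω | c ≤ ∑ i, h (D i ω)} ≤ ENNReal.ofReal (exp (n * b - c)) := by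
  set X : Fin n → Ω → ℝ := fun i ω => h (D i ω) with hX
  have hXindep : iIndepFun X μ := hindep.comp (fun _ => h) (fun _ => hh)
  have hXmeas : ∀ i, Measurable (X i) := fun i => hh.comp (hDmeas i)
  have hexpX : ∀ i, IdentDistrib (fun ω => exp (X i ω)) (fun ω => exp (h (D0 ω))) μ μ :=
    fun i => (hident i).comp (measurable_exp.comp hh)
  have hXint : ∀ i ∈ Finset.univ, Integrable (fun ω => exp (1 * X i ω)) μ := fun i _ => by
    simpa only [one_mul] using (hexpX i).integrable_iff.mpr hint
  have hmgf : ∀ i ∈ Finset.univ, mgf (X i) μ 1 = ∫ ω, exp (h (D0 ω)) ∂μ := fun i _ => by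
    simpa only [mgf, one_mul] using (hexpX i).integral_eq
  have hchernoff := measure_ge_le_exp_mul_mgf c zero_le_one
    (hXindep.integrable_exp_mul_sum hXmeas hXint)
  rw [hXindep.mgf_sum hXmeas, Finset.prod_congr rfl hmgf, Finset.prod_const, Finset.card_univ,
    Fintype.card_fin] at hchernoff
  have hE0 : 0 ≤ ∫ ω, exp (h (D0 ω)) ∂μ := integral_nonneg fun _ => (exp_pos _).le
  calc μ {ω | c ≤ ∑ i, h (D i ω)} = ENNReal.ofReal (μ.real {ω | c ≤ (∑ i, X i) ω}) := by
        simp [hX, Finset.sum_apply, measureReal_def]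
    _ ≤ ENNReal.ofReal (exp (-1 * c) * (∫ ω, exp (h (D0 ω)) ∂μ) ^ n) :=
        ENNReal.ofReal_le_ofReal hchernoff
    _ ≤ ENNReal.ofReal (exp (-1 * c) * exp b ^ n) := by gcongr
    _ = ENNReal.ofReal (exp (n * b - c)) := by
        rw [← exp_nat_mul, ← exp_add]
        ring_nf

noncomputable def lsEstimate (lam : ℝ) (g : α → ℝ) (D : Fin n → Ω → α) (ω : Ω) : ℝ :=
  -(1 / (n * lam)) * ∑ i, log (1 - lam * g (D i ω))

variable {lam : ℝ} {g : α → ℝ}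

theorem measure_lsEstimate_le_integral_sub_le (hn : 0 < n) (hlam : 0 < lam)
    (hDmeas : ∀ i, Measurable (D i)) (hindep : iIndepFun D μ)
    (hident : ∀ i, IdentDistrib (D i) D0 μ μ) (hg : Measurable g) (hg0 : ∀ a, g a ≤ 0)
    (hgint : Integrable (fun ω => g (D0 ω)) μ) (u : ℝ) :
    μ {ω | lsEstimate lam g D ω ≤ (∫ ω, g (D0 ω) ∂μ) - u} ≤
      ENNReal.ofReal (exp (-(n * lam * u))) := by
  set E := ∫ ω, g (D0 ω) ∂μ
  have hnl : (0 : ℝ) < n * lam := by positivity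
  have hexp : ∀ a, exp (log (1 - lam * g a)) = 1 - lam * g a :=
    fun a => exp_log (by nlinarith [hg0 a])
  have hint : Integrable (fun ω => exp (log (1 - lam * g (D0 ω)))) μ := by
    simp only [hexp]
    exact (integrable_const 1).sub (hgint.const_mul lam)
  have hb : ∫ ω, exp (log (1 - lam * g (D0 ω))) ∂μ ≤ exp (-(lam * E)) := by
    simp only [hexp]
    exact integral_one_sub_mul_le_exp hgint
  calc μ {ω | lsEstimate lam g D ω ≤ E - u}
      ≤ μ {ω | n * lam * (u - E) ≤ ∑ i, log (1 - lam * g (D i ω))} :=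
        measure_mono fun ω hω => by
          rw [Set.mem_ofPred_eq, lsEstimate, neg_mul, one_div_mul_eq_div, neg_le,
            le_div_iff₀ hnl] at hω
          simp only [Set.mem_ofPred_eq]
          linarith
    _ ≤ ENNReal.ofReal (exp (n * -(lam * E) - n * lam * (u - E))) :=
        measure_le_sum_le_exp_of_integral_exp_le hDmeas hindep hident
          (measurable_log.comp ((hg.const_mul lam).const_sub 1)) hint hb _
    _ = ENNReal.ofReal (exp (-(n * lam * u))) := by ring_nf

theorem measure_integral_add_le_lsEstimate_le (hn : 0 < n) (hlam : 0 < lam)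
    (hDmeas : ∀ i, Measurable (D i)) (hindep : iIndepFun D μ)
    (hident : ∀ i, IdentDistrib (D i) D0 μ μ) (hg : Measurable g) (hg0 : ∀ a, g a ≤ 0)
    (hgint : Integrable (fun ω => g (D0 ω)) μ) (hgint2 : Integrable (fun ω => g (D0 ω) ^ 2) μ)
    (u : ℝ) :
    μ {ω | (∫ ω, g (D0 ω) ∂μ) + lam * (∫ ω, g (D0 ω) ^ 2 / (1 - lam * g (D0 ω)) ∂μ) + u ≤
        lsEstimate lam g D ω} ≤ ENNReal.ofReal (exp (-(n * lam * u))) := by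
  set E := ∫ ω, g (D0 ω) ∂μ
  set S := ∫ ω, g (D0 ω) ^ 2 / (1 - lam * g (D0 ω)) ∂μ
  have hnl : (0 : ℝ) < n * lam := by positivity
  have hexp : ∀ a, exp (-log (1 - lam * g a)) = (1 - lam * g a)⁻¹ := fun a => by
    rw [exp_neg, exp_log (by nlinarith [hg0 a])]
  have hint : Integrable (fun ω => exp (-log (1 - lam * g (D0 ω)))) μ := by
    simp only [hexp]
    exact integrable_inv_one_sub_mul (fun ω => hg0 _) hlam.le hgint.aemeasurable
  have hb : ∫ ω, exp (-log (1 - lam * g (D0 ω))) ∂μ ≤ exp (lam * E + lam ^ 2 * S) := by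
    simp only [hexp]
    rw [integral_inv_one_sub_mul (fun ω => hg0 _) hlam.le hgint hgint2]
    linarith [add_one_le_exp (lam * E + lam ^ 2 * S)]
  calc μ {ω | E + lam * S + u ≤ lsEstimate lam g D ω}
      ≤ μ {ω | n * lam * (E + lam * S + u) ≤ ∑ i, -log (1 - lam * g (D i ω))} :=
        measure_mono fun ω hω => by
          rw [Set.mem_ofPred_eq, lsEstimate, neg_mul, one_div_mul_eq_div, le_neg,
            div_le_iff₀ hnl] at hω
          simp only [Set.mem_ofPred_eq, Finset.sum_neg_distrib]
          linarith
    _ ≤ ENNReal.ofReal (exp (n * (lam * E + lam ^ 2 * S) - n * lam * (E + lam * S + u))) :=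
        measure_le_sum_le_exp_of_integral_exp_le hDmeas hindep hident
          (measurable_log.comp ((hg.const_mul lam).const_sub 1)).neg hint hb _
    _ = ENNReal.ofReal (exp (-(n * lam * u))) := by ring_nf

end IID

/-- `D i` is the i-th logged data point and `f k (D i ω) = w_{π_k}(x_i,a_i) c_i` is the weighted
cost of policy `k` on it. -/
theorem stmt16 {Ω : Type*} [MeasurableSpace Ω] (μ : Measure Ω) [IsProbabilityMeasure μ]
    {α : Type*} [MeasurableSpace α]
    (n m : ℕ) (hn : 0 < n) (hm : 0 < m)
    (D : Fin n → Ω → α) (D0 : Ω → α)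
    (hDmeas : ∀ i, Measurable (D i))
    (hindep : iIndepFun D μ)
    (hident : ∀ i, IdentDistrib (D i) D0 μ μ)
    (f : Fin m → α → ℝ) (hfmeas : ∀ k, Measurable (f k))
    (hf0 : ∀ k a, f k a ≤ 0)
    (hfint : ∀ k, Integrable (fun ω => f k (D0 ω)) μ)
    (hfint2 : ∀ k, Integrable (fun ω => f k (D0 ω) ^ 2) μ)
    (lam : ℝ) (hlam : 0 < lam) (δ : ℝ) (hδ : δ ∈ Set.Ioc (0:ℝ) 1)
    (R : Fin m → ℝ) (hR : ∀ k, R k = ∫ ω, f k (D0 ω) ∂μ)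
    (S : Fin m → ℝ)
    (hS : ∀ k, S k = ∫ ω, f k (D0 ω) ^ 2 / (1 - lam * f k (D0 ω)) ∂μ)
    (Rhat : Fin m → Ω → ℝ)
    (hRhat : ∀ k ω, Rhat k ω = -(1 / (n * lam)) * ∑ i, Real.log (1 - lam * f k (D i ω)))
    (kstar : Fin m) (hkstar : ∀ k, R kstar ≤ R k)
    (khat : Ω → Fin m) (hkhat : ∀ ω k, Rhat (khat ω) ω ≤ Rhat k ω) :
    ENNReal.ofReal (1 - δ) ≤
      μ {ω | 0 ≤ R (khat ω) - R kstar ∧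
             R (khat ω) - R kstar ≤
               lam * S kstar + 2 * Real.log (2 * m / δ) / (lam * n)} := by
  have hδ0 : 0 < δ := hδ.1
  set u := log (2 * m / δ) / (n * lam) with hu
  have hexpu : exp (-(n * lam * u)) = δ / (2 * m) := by
    rw [hu, mul_div_cancel₀ _ (by positivity), exp_neg, exp_log (by positivity), inv_div]
  have hRhat_eq : ∀ k, Rhat k = lsEstimate lam (f k) D := fun k => funext (hRhat k)
  have hlow : ∀ k, μ {ω | Rhat k ω ≤ R k - u} ≤ ENNReal.ofReal (δ / (2 * m)) := fun k => by
    rw [hRhat_eq, hR, ← hexpu]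
    exact measure_lsEstimate_le_integral_sub_le hn hlam hDmeas hindep hident (hfmeas k) (hf0 k)
      (hfint k) u
  have hup : μ {ω | R kstar + lam * S kstar + u ≤ Rhat kstar ω} ≤
      ENNReal.ofReal (δ / (2 * m)) := by
    rw [hRhat_eq, hR, hS, ← hexpu]
    exact measure_integral_add_le_lsEstimate_le hn hlam hDmeas hindep hident (hfmeas kstar)
      (hf0 kstar) (hfint kstar) (hfint2 kstar) u
  refine ofReal_one_sub_le_of_measure_compl_le hδ0.le
    ((measure_mono fun ω hω => ?_).trans (measure_iUnion_union_le_of_le_div hm hδ0.le hlow hup))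
  by_contra hgood
  simp only [Set.mem_union, Set.mem_iUnion, Set.mem_ofPred_eq, not_or, not_exists,
    not_le] at hgood
  refine hω ⟨sub_nonneg.mpr (hkstar _), ?_⟩
  have h2u : 2 * log (2 * m / δ) / (lam * n) = 2 * u := by rw [hu]; ring
  linarith [hgood.1 (khat ω), hgood.2, hkhat ω kstar]
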